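/- Leading principal minors of a block lower-triangular factorization: for a symmetric positive definite (p+q)×(p+q) matrix x = [[x_1, x_{21}ᵀ],[x_{21}, x_0]], and for each k ≤ p, the k-th leading principal minor of x equals the k-th leading principal minor of x_1; consequently the generalized power satisfies Δ_{(s',s'')}(x) = Δ_{s'}(x_1) · ∏_{k=1}^{q} Δ'_k(x)^{s''_k − s''_{k+1}} where Δ'_k(x) = Δ_{p+k}(x)/Δ_p(x_1)... In particular, Δ_s restricted to block-diagonal matrices diag(x_1, x_0) factors: Δ_{(s',s'')}(diag(x_1,x_0)) = Δ_{s'}(x_1) Δ_{s''}(x_0). -/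

import Mathlib

open Matrix

noncomputable section

/-- The determinant of the leading principal `k × k` submatrix of `x`. -/
def lpm {r : ℕ} (x : Matrix (Fin r) (Fin r) ℝ) (k : ℕ) (h : k ≤ r) : ℝ :=
  (x.submatrix (fun i : Fin k => Fin.castLE h i) (fun i : Fin k => Fin.castLE h i)).det

/-- The generalized power `Δ_s(x) = ∏ₖ Δₖ(x)^(sₖ - sₖ₊₁)` (convention `s_{r+1} = 0`). -/
def genPow {r : ℕ} (s : Fin r → ℝ) (x : Matrix (Fin r) (Fin r) ℝ) : ℝ :=
  ∏ k : Fin r, (lpm x (k.val + 1) k.isLt) ^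
    (s k - if h : k.val + 1 < r then s ⟨k.val + 1, h⟩ else 0)

/-! A leading minor of order `k ≤ p` of the reindexed block matrix only sees the upper-left
block, and for a block-diagonal matrix the minor of order `p + m` is `det x₁ · Δₘ(x₀)`.
Summation by parts gives `Δ_s(x) = ∏ₖ (Δₖ₊₁(x) / Δₖ(x)) ^ sₖ`; in this form the factor `det x₁`
cancels from every ratio past `p`, so the product splits along `Fin.append s' s''`. -/

theorem lpm_zero {r : ℕ} (x : Matrix (Fin r) (Fin r) ℝ) (h : 0 ≤ r) : lpm x 0 h = 1 :=
  det_isEmpty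

theorem lpm_pos_of_posDef {r : ℕ} {x : Matrix (Fin r) (Fin r) ℝ} (hx : x.PosDef) (k : ℕ)
    (h : k ≤ r) : 0 < lpm x k h :=
  (hx.submatrix (Fin.castLE_injective h)).det_pos

theorem genPow_eq_prod_rpow_div {r : ℕ} (s : Fin r → ℝ) (x : Matrix (Fin r) (Fin r) ℝ)
    (hx : ∀ k h, 0 < lpm x k h) :
    genPow s x = ∏ k : Fin r, (lpm x (k + 1) k.isLt / lpm x k k.isLt.le) ^ s k := by
  unfold genPow
  simp_rw [Real.rpow_sub (hx _ _), Real.div_rpow (hx _ _).le (hx _ _).le, Finset.prod_div_distrib]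
  congr 1
  cases r with
  | zero => rfl
  | succ n =>
    rw [Fin.prod_univ_castSucc, Fin.prod_univ_succ]
    simp [lpm_zero, Fin.succ]

section

variable {p q : ℕ}

theorem lpm_reindex_fromBlocks_of_le (A : Matrix (Fin p) (Fin p) ℝ) (B : Matrix (Fin p) (Fin q) ℝ)
    (C : Matrix (Fin q) (Fin p) ℝ) (D : Matrix (Fin q) (Fin q) ℝ) (k : ℕ) (hk : k ≤ p)
    (h : k ≤ p + q) :
    lpm ((fromBlocks A B C D).reindex finSumFinEquiv finSumFinEquiv) k h = lpm A k hk := by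
  have hcast (i : Fin k) : Fin.castLE h i = Fin.castAdd q (Fin.castLE hk i) := rfl
  unfold lpm
  congr 1
  ext i j
  simp [hcast]

theorem lpm_reindex_fromBlocks_zero_add (A : Matrix (Fin p) (Fin p) ℝ)
    (D : Matrix (Fin q) (Fin q) ℝ) (m : ℕ) (hm : m ≤ q) (h : p + m ≤ p + q) :
    lpm ((fromBlocks A 0 0 D).reindex finSumFinEquiv finSumFinEquiv) (p + m) h =
      A.det * lpm D m hm := by
  have hcast₁ (i : Fin p) : Fin.castLE h (Fin.castAdd m i) = Fin.castAdd q i := rfl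
  have hcast₂ (i : Fin m) : Fin.castLE h (Fin.natAdd p i) = Fin.natAdd p (Fin.castLE hm i) := rfl
  unfold lpm
  rw [← det_fromBlocks_zero₂₁ A 0, ← det_submatrix_equiv_self finSumFinEquiv, submatrix_submatrix]
  congr 1
  ext (i | i) (j | j) <;> simp [hcast₁, hcast₂]

theorem lpm_reindex_fromBlocks_zero_pos {A : Matrix (Fin p) (Fin p) ℝ}
    {D : Matrix (Fin q) (Fin q) ℝ} (hA : A.PosDef) (hD : D.PosDef) (k : ℕ) (h : k ≤ p + q) :
    0 < lpm ((fromBlocks A 0 0 D).reindex finSumFinEquiv finSumFinEquiv) k h := by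
  rcases le_or_gt k p with hk | hk
  · rw [lpm_reindex_fromBlocks_of_le A 0 0 D k hk]
    exact lpm_pos_of_posDef hA k hk
  · obtain ⟨m, rfl⟩ := Nat.exists_eq_add_of_le hk.le
    rw [lpm_reindex_fromBlocks_zero_add A D m (by omega)]
    exact mul_pos hA.det_pos (lpm_pos_of_posDef hD _ _)

theorem genPow_reindex_fromBlocks_zero {A : Matrix (Fin p) (Fin p) ℝ}
    {D : Matrix (Fin q) (Fin q) ℝ} (hA : A.PosDef) (hD : D.PosDef) (s' : Fin p → ℝ)
    (s'' : Fin q → ℝ) :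
    genPow (Fin.append s' s'') ((fromBlocks A 0 0 D).reindex finSumFinEquiv finSumFinEquiv) =
      genPow s' A * genPow s'' D := by
  rw [genPow_eq_prod_rpow_div _ _ (lpm_reindex_fromBlocks_zero_pos hA hD),
    genPow_eq_prod_rpow_div _ _ (lpm_pos_of_posDef hA),
    genPow_eq_prod_rpow_div _ _ (lpm_pos_of_posDef hD), Fin.prod_univ_add]
  congr 1
  · refine Fintype.prod_congr _ _ fun i => ?_
    simp only [Fin.append_left, Fin.val_castAdd]
    rw [lpm_reindex_fromBlocks_of_le A 0 0 D _ i.isLt,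
      lpm_reindex_fromBlocks_of_le A 0 0 D _ i.isLt.le]
  · refine Fintype.prod_congr _ _ fun j => ?_
    simp only [Fin.append_right, Fin.val_natAdd, add_assoc]
    rw [lpm_reindex_fromBlocks_zero_add A D _ j.isLt.le,
      lpm_reindex_fromBlocks_zero_add A D _ j.isLt, mul_div_mul_left _ _ hA.det_pos.ne']

end

theorem stmt_13_general (p q : ℕ)
    (x1 : Matrix (Fin p) (Fin p) ℝ) (x0 : Matrix (Fin q) (Fin q) ℝ)
    (x21 : Matrix (Fin q) (Fin p) ℝ)
    (h1p : x1.PosDef) (h0p : x0.PosDef)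
    (s' : Fin p → ℝ) (s'' : Fin q → ℝ) :
    (∀ (k : ℕ) (hk : k ≤ p),
      lpm ((Matrix.fromBlocks x1 x21ᵀ x21 x0).reindex finSumFinEquiv finSumFinEquiv) k
          (hk.trans (Nat.le_add_right p q)) = lpm x1 k hk) ∧
    genPow (Fin.append s' s'')
        ((Matrix.fromBlocks x1 0 0 x0).reindex finSumFinEquiv finSumFinEquiv) =
      genPow s' x1 * genPow s'' x0 :=
  ⟨fun k hk => lpm_reindex_fromBlocks_of_le x1 x21ᵀ x21 x0 k hk _,
    genPow_reindex_fromBlocks_zero h1p h0p s' s''⟩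

theorem stmt_13 (p q : ℕ)
    (x1 : Matrix (Fin p) (Fin p) ℝ) (x0 : Matrix (Fin q) (Fin q) ℝ)
    (x21 : Matrix (Fin q) (Fin p) ℝ)
    (h1 : x1.IsSymm) (h1p : x1.PosDef) (h0 : x0.IsSymm) (h0p : x0.PosDef)
    (hx : ((Matrix.fromBlocks x1 x21ᵀ x21 x0).reindex finSumFinEquiv finSumFinEquiv).PosDef)
    (s' : Fin p → ℝ) (s'' : Fin q → ℝ) :
    (∀ (k : ℕ) (hk : k ≤ p),
      lpm ((Matrix.fromBlocks x1 x21ᵀ x21 x0).reindex finSumFinEquiv finSumFinEquiv) k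
          (hk.trans (Nat.le_add_right p q)) = lpm x1 k hk) ∧
    genPow (Fin.append s' s'')
        ((Matrix.fromBlocks x1 0 0 x0).reindex finSumFinEquiv finSumFinEquiv) =
      genPow s' x1 * genPow s'' x0 :=
  stmt_13_general p q x1 x0 x21 h1p h0p s' s''
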